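/- Let n be a positive integer, let J : ℝⁿ → ℝ be differentiable with J(z) ≥ 0 for all z, and let α : ℝ → ℝ be an extended class K function. Let x : ℝ → ℝⁿ be differentiable with ∇J(x(t)) ≠ 0 for all t ≥ 0, satisfying x'(t) = (α(-J(x(t))) / ‖∇J(x(t))‖²) • ∇J(x(t)) for all t ≥ 0. Then for all t ≥ 0 the derivative of t ↦ J(x(t)) equals α(-J(x(t))), the function t ↦ J(x(t)) is nonincreasing on [0,∞), and J(x(t)) → 0 as t → ∞. -/

import Mathlib

open Filter Set Topology

/-!
Along the flow, the chain rule gives `d/dt J(x t) = ⟪∇J, x'⟫ = α(-J(x t))`, which is `≤ 0` since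
`J ≥ 0`. So `J(x t)` decreases; if it stayed above some `ε > 0`, its slope would stay below
`α(-ε) < 0`, and `J(x t)` would become negative in finite time.
-/

theorem HasGradientAt.comp_hasDerivAt {F : Type*} [NormedAddCommGroup F] [InnerProductSpace ℝ F]
    [CompleteSpace F] {J : F → ℝ} {g : F} {x : ℝ → F} {v : F} {t : ℝ}
    (hJ : HasGradientAt J g (x t)) (hx : HasDerivAt x v t) :
    HasDerivAt (fun s => J (x s)) (inner ℝ g v) t :=
  hJ.hasFDerivAt.comp_hasDerivAt t hx

theorem real_inner_div_norm_sq_smul_self {F : Type*} [NormedAddCommGroup F]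
    [InnerProductSpace ℝ F] {g : F} (hg : g ≠ 0) (c : ℝ) :
    inner ℝ g ((c / ‖g‖ ^ 2) • g) = c := by
  have : ‖g‖ ≠ 0 := norm_ne_zero_iff.mpr hg
  rw [real_inner_smul_right, real_inner_self_eq_norm_sq]
  field_simp

theorem image_sub_le_mul_sub_of_hasDerivAt_le_Ici {f f' : ℝ → ℝ} {a C : ℝ}
    (hf : ∀ t, a ≤ t → HasDerivAt f (f' t) t) (hC : ∀ t, a ≤ t → f' t ≤ C)
    {s t : ℝ} (hs : a ≤ s) (hst : s ≤ t) : f t - f s ≤ C * (t - s) := by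
  refine (convex_Ici a).image_sub_le_mul_sub_of_deriv_le
    (fun r hr => (hf r hr).continuousAt.continuousWithinAt) ?_ ?_ s hs t (hs.trans hst) hst
  · rw [interior_Ici]
    exact fun r hr => (hf r (le_of_lt hr)).differentiableAt.differentiableWithinAt
  · rw [interior_Ici]
    exact fun r hr => (hf r (le_of_lt hr)).deriv ▸ hC r (le_of_lt hr)

section ClassKFlow

variable {y α : ℝ → ℝ}

theorem antitoneOn_of_hasDerivAt_eq_comp_neg (hα : Monotone α) (hα0 : α 0 = 0)
    (hy : ∀ t, 0 ≤ t → HasDerivAt y (α (-y t)) t) (hnn : ∀ t, 0 ≤ t → 0 ≤ y t) :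
    AntitoneOn y (Ici 0) := by
  intro s hs t _ hst
  have hslope : ∀ r, 0 ≤ r → α (-y r) ≤ 0 :=
    fun r hr => hα0 ▸ hα (neg_nonpos.mpr (hnn r hr))
  have := image_sub_le_mul_sub_of_hasDerivAt_le_Ici hy hslope (mem_Ici.mp hs) hst
  linarith

theorem tendsto_zero_of_hasDerivAt_eq_comp_neg (hα : StrictMono α) (hα0 : α 0 = 0)
    (hy : ∀ t, 0 ≤ t → HasDerivAt y (α (-y t)) t) (hnn : ∀ t, 0 ≤ t → 0 ≤ y t) :
    Tendsto y atTop (𝓝 0) := by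
  have hanti := antitoneOn_of_hasDerivAt_eq_comp_neg hα.monotone hα0 hy hnn
  refine tendsto_order.2 ⟨fun a ha => ?_, fun ε hε => ?_⟩
  · filter_upwards [eventually_ge_atTop 0] with t ht using ha.trans_le (hnn t ht)
  obtain ⟨T, hT0, hTε⟩ : ∃ T, 0 ≤ T ∧ y T < ε := by
    by_contra! hge
    have hrate : α (-ε) < 0 := hα0 ▸ hα (neg_lt_zero.mpr hε)
    have hbound : ∀ t, 0 ≤ t → y t ≤ y 0 + α (-ε) * t := fun t ht => by
      have := image_sub_le_mul_sub_of_hasDerivAt_le_Ici hy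
        (fun r hr => hα.monotone (neg_le_neg (hge r hr))) le_rfl ht
      linarith
    have hline : Tendsto (fun t => y 0 + α (-ε) * t) atTop atBot :=
      tendsto_atBot_add_const_left _ _ (tendsto_id.const_mul_atTop_of_neg hrate)
    obtain ⟨t, hneg, ht⟩ := ((hline.eventually (eventually_lt_atBot 0)).and
      (eventually_ge_atTop 0)).exists
    linarith [hbound t ht, hnn t ht]
  filter_upwards [eventually_ge_atTop T] with t ht
  exact (hanti hT0 (mem_Ici.mpr (hT0.trans ht)) ht).trans_lt hTε

end ClassKFlow

theorem cost_evolution_unrelaxed_general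
    (n : ℕ)
    (J : EuclideanSpace ℝ (Fin n) → ℝ) (hJdiff : Differentiable ℝ J)
    (hJnn : ∀ z : EuclideanSpace ℝ (Fin n), 0 ≤ J z)
    (α : ℝ → ℝ) (hαmono : StrictMono α) (hα0 : α 0 = 0)
    (x : ℝ → EuclideanSpace ℝ (Fin n)) (hx : Differentiable ℝ x)
    (hgrad : ∀ t : ℝ, 0 ≤ t → gradient J (x t) ≠ 0)
    (hode : ∀ t : ℝ, 0 ≤ t → deriv x t
      = (α (-(J (x t))) / ‖gradient J (x t)‖ ^ 2) • gradient J (x t)) :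
    (∀ t : ℝ, 0 ≤ t → deriv (fun s => J (x s)) t = α (-(J (x t)))) ∧
    AntitoneOn (fun t => J (x t)) (Set.Ici (0 : ℝ)) ∧
    Tendsto (fun t => J (x t)) atTop (nhds 0) := by
  have hcost : ∀ t, 0 ≤ t → HasDerivAt (fun s => J (x s)) (α (-(J (x t)))) t := by
    intro t ht
    have := (hJdiff (x t)).hasGradientAt.comp_hasDerivAt (hx t).hasDerivAt
    rwa [hode t ht, real_inner_div_norm_sq_smul_self (hgrad t ht)] at this
  exact ⟨fun t ht => (hcost t ht).deriv,
    antitoneOn_of_hasDerivAt_eq_comp_neg hαmono.monotone hα0 hcost fun t _ => hJnn (x t),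
    tendsto_zero_of_hasDerivAt_eq_comp_neg hαmono hα0 hcost fun t _ => hJnn (x t)⟩

/-- Corollary to Proposition 1: under the unrelaxed minimum-energy input
`x' t = (α (-J (x t)) / ‖∇J (x t)‖²) • ∇J (x t)` (with `∇J (x t) ≠ 0` along the
trajectory), the cost satisfies `(d/dt) J (x t) = α (-J (x t))`, is nonincreasing
on `[0, ∞)`, and converges to `0` as `t → ∞`. -/
theorem cost_evolution_unrelaxed
    (n : ℕ) (hn : 0 < n)
    (J : EuclideanSpace ℝ (Fin n) → ℝ) (hJdiff : Differentiable ℝ J)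
    (hJnn : ∀ z : EuclideanSpace ℝ (Fin n), 0 ≤ J z)
    (α : ℝ → ℝ) (hαcont : Continuous α) (hαmono : StrictMono α) (hα0 : α 0 = 0)
    (x : ℝ → EuclideanSpace ℝ (Fin n)) (hx : Differentiable ℝ x)
    (hgrad : ∀ t : ℝ, 0 ≤ t → gradient J (x t) ≠ 0)
    (hode : ∀ t : ℝ, 0 ≤ t → deriv x t
      = (α (-(J (x t))) / ‖gradient J (x t)‖ ^ 2) • gradient J (x t)) :
    (∀ t : ℝ, 0 ≤ t → deriv (fun s => J (x s)) t = α (-(J (x t)))) ∧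
    AntitoneOn (fun t => J (x t)) (Set.Ici (0 : ℝ)) ∧
    Tendsto (fun t => J (x t)) atTop (nhds 0) :=
  cost_evolution_unrelaxed_general n J hJdiff hJnn α hαmono hα0 x hx hgrad hode
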